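/- Bounded variation of the Hamiltonian along perturbed orbits: For every r > 0 there exists λ₀ > 0 such that for all 0 < λ < λ₀ and every z ∈ (λℤ)² with Euclidean norm ‖z‖ ≤ r, one has |𝒫(F_λ⁴(z)) − 𝒫(z)| ≤ λ·(2‖z‖ + 3√2)² and |𝒫(F_λ(z)) − 𝒫(z)| ≤ 2λ·(‖z‖ + 2)². -/
import Mathlib


open scoped Classical

noncomputable section

open Set

/-- The scaled round-off map `F_λ` on the plane: `F_λ(z) = λ·F(z/λ)`,
so `F_λ(z) = (λ⌊z₁⌋ − z₂, z₁)`. -/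
def Fl (lam : ℝ) (z : ℝ × ℝ) : ℝ × ℝ := (lam * (⌊z.1⌋ : ℝ) - z.2, z.1)

/-- The inverse of `F_λ`. -/
def Flinv (lam : ℝ) (z : ℝ × ℝ) : ℝ × ℝ := (z.2, lam * (⌊z.2⌋ : ℝ) - z.1)

/-- Integer iterate `F_λ^k`, `k ∈ ℤ`. -/
def FlIter (lam : ℝ) (k : ℤ) (z : ℝ × ℝ) : ℝ × ℝ :=
  if 0 ≤ k then (Fl lam)^[k.toNat] z else (Flinv lam)^[(-k).toNat] z

/-- Membership in the scaled lattice `(λℤ)²`. -/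
def IsLatticePt (lam : ℝ) (z : ℝ × ℝ) : Prop := ∃ a b : ℤ, z = (lam * a, lam * b)

/-- The discrete vector field `𝐯(z) = F_λ⁴(z) − z`. -/
def vfield (lam : ℝ) (z : ℝ × ℝ) : ℝ × ℝ := (Fl lam)^[4] z - z

/-- The auxiliary (integrable) vector field `𝐰`. -/
def wfield (lam : ℝ) (z : ℝ × ℝ) : ℝ × ℝ :=
  (lam * (2 * (⌊z.2⌋ : ℝ) + 1), -(lam * (2 * (⌊z.1⌋ : ℝ) + 1)))

/-- The constant value `𝐰_{m,n}` of `𝐰` on the box `B_{m,n}`. -/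
def wmn (lam : ℝ) (m n : ℤ) : ℝ × ℝ :=
  (lam * (2 * (n : ℝ) + 1), -(lam * (2 * (m : ℝ) + 1)))

/-- The piecewise-affine function `P(x) = ⌊x⌋² + (2⌊x⌋+1)(x − ⌊x⌋)`. -/
def Pfun (x : ℝ) : ℝ := (⌊x⌋ : ℝ) ^ 2 + (2 * (⌊x⌋ : ℝ) + 1) * (x - (⌊x⌋ : ℝ))

/-- The Hamiltonian `𝒫(x,y) = P(x) + P(y)`. -/
def Ham (z : ℝ × ℝ) : ℝ := Pfun z.1 + Pfun z.2

/-- The round Hamiltonian `𝒬(x,y) = x² + y²`. -/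
def Qfun (z : ℝ × ℝ) : ℝ := z.1 ^ 2 + z.2 ^ 2

/-- The level set `Π(z)` of `𝒫` through `z`. -/
def levelSet (z : ℝ × ℝ) : Set (ℝ × ℝ) := {w | Ham w = Ham z}

/-- The grid `Δ` of horizontal and vertical integer lines. -/
def DeltaSet : Set (ℝ × ℝ) := {z | (∃ m : ℤ, z.1 = (m : ℝ)) ∨ (∃ n : ℤ, z.2 = (n : ℝ))}

/-- The box `B_{m,n}`. -/
def Bbox (m n : ℤ) : Set (ℝ × ℝ) := {z | ⌊z.1⌋ = m ∧ ⌊z.2⌋ = n}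

/-- The lattice `ℤ² ⊂ ℝ²`. -/
def intLattice : Set (ℝ × ℝ) := {z | ∃ a b : ℤ, z = ((a : ℝ), (b : ℝ))}

/-- `r(c)`: the number of representations of `c` as a sum of two integer squares. -/
def rfun (c : ℝ) : ℕ := Set.ncard {p : ℤ × ℤ | ((p.1 : ℝ)) ^ 2 + ((p.2 : ℝ)) ^ 2 = c}

/-- Euclidean distance from `z` to the symmetry line `y = x`. -/
def dG (z : ℝ × ℝ) : ℝ := |z.1 - z.2| / Real.sqrt 2

/-- The integer round-off `R`. -/
def Rfl (z : ℝ × ℝ) : ℤ × ℤ := (⌊z.1⌋, ⌊z.2⌋)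

/-- The rescaled round-off `R_λ(w) = λ·R(w/λ)`. -/
def Rlam (lam : ℝ) (w : ℝ × ℝ) : ℝ × ℝ :=
  (lam * (⌊w.1 / lam⌋ : ℝ), lam * (⌊w.2 / lam⌋ : ℝ))

/-- The return domain `X`. -/
def Xdom (lam : ℝ) : Set (ℝ × ℝ) :=
  {z | IsLatticePt lam z ∧ 0 ≤ z.1 ∧ 0 ≤ z.2 ∧
    dG z ≤ dG ((Fl lam)^[4] z) ∧ dG z < dG ((Flinv lam)^[4] z)}

/-- Forward transit time `τ` to `X`. -/
def tau (lam : ℝ) (z : ℝ × ℝ) : ℕ := sInf {k : ℕ | 1 ≤ k ∧ (Fl lam)^[k] z ∈ Xdom lam}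

/-- Backward transit time `τ₋` to `X`. -/
def tauMinus (lam : ℝ) (z : ℝ × ℝ) : ℕ := sInf {k : ℕ | (Flinv lam)^[k] z ∈ Xdom lam}

/-- The return orbit `O_τ(z)`. -/
def returnOrbit (lam : ℝ) (z : ℝ × ℝ) : Set (ℝ × ℝ) :=
  {w | ∃ k : ℤ, -(tauMinus lam z : ℤ) ≤ k ∧ k ≤ (tau lam z : ℤ) ∧ w = FlIter lam k z}

/-- The first-return map `Φ`. -/
def Phi (lam : ℝ) (z : ℝ × ℝ) : ℝ × ℝ := (Fl lam)^[tau lam z] z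

/-- The full orbit `O(z) = {F_λ^t(z) : t ∈ ℤ}`. -/
def fullOrbit (lam : ℝ) (z : ℝ × ℝ) : Set (ℝ × ℝ) := {w | ∃ t : ℤ, w = FlIter lam t z}

/-- The set `Λ` of transition points. -/
def TransSet (lam : ℝ) : Set (ℝ × ℝ) :=
  {z | IsLatticePt lam z ∧ Rfl ((Fl lam)^[4] z) ≠ Rfl z}

/-- The set `Σ = ⋃ Σ_{m,n}`. -/
def SigmaSet (lam : ℝ) : Set (ℝ × ℝ) :=
  {z | z ∈ TransSet lam ∧ ∃ m n : ℤ,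
    max |z.1 - (m : ℝ)| |z.2 - (n : ℝ)| ≤
      lam * (max |2 * (m : ℝ) + 1| |2 * (n : ℝ) + 1| + 2)}

/-- `ℰ`: the natural numbers which are sums of two integer squares. -/
def Eset : Set ℕ := {n | ∃ a b : ℤ, (n : ℤ) = a ^ 2 + b ^ 2}

/-- The successor of `e` in `ℰ`. -/
def nextE (e : ℕ) : ℕ := sInf {f | f ∈ Eset ∧ e < f}

/-- The critical interval `I^e = (e, e′)`. -/
def Icrit (e : ℕ) : Set ℝ := Set.Ioo (e : ℝ) (nextE e : ℝ)

/-- The set `X^e`. -/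
def Xe (lam : ℝ) (e : ℕ) : Set (ℝ × ℝ) :=
  {z | z ∈ Xdom lam ∧ ∀ w ∈ returnOrbit lam z, Ham w ∈ Icrit e}

/-- A point of `X^e` is regular if it is not a transition point and its return
orbit avoids `Σ`. -/
def IsRegularPt (lam : ℝ) (e : ℕ) (z : ℝ × ℝ) : Prop :=
  z ∈ Xe lam e ∧ z ∉ TransSet lam ∧ returnOrbit lam z ∩ SigmaSet lam = ∅

/-- `J` is a maximal subinterval `Ĩ^e(λ)` of `I^e` on which all points of `X^e`
are regular. -/
def IsMaxRegInterval (lam : ℝ) (e : ℕ) (J : Set ℝ) : Prop :=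
  J ⊆ Icrit e ∧ J.OrdConnected ∧
    (∀ z ∈ Xe lam e, Ham z ∈ J → IsRegularPt lam e z) ∧
    ∀ J' : Set ℝ, J ⊆ J' → J' ⊆ Icrit e → J'.OrdConnected →
      (∀ z ∈ Xe lam e, Ham z ∈ J' → IsRegularPt lam e z) → J' = J

/-- The regular domain `X̃^e` determined by the interval `J = Ĩ^e(λ)`. -/
def Xtilde (lam : ℝ) (e : ℕ) (J : Set ℝ) : Set (ℝ × ℝ) :=
  {z | z ∈ Xe lam e ∧ Ham z ∈ J}

/-- The type of a vertex: the floor of the absolute value of its non-integer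
coordinate. -/
def vtype (z : ℝ × ℝ) : ℕ :=
  if ∃ m : ℤ, z.1 = (m : ℝ) then (⌊|z.2|⌋).toNat else (⌊|z.1|⌋).toNat

/-- `v` (1-indexed, entries `v 1, …, v k` with `k = ⌊√e⌋+1`) is the vertex list
of the polygon class of `e`, and `o j` records whether the `j`-th vertex lies on
a horizontal lattice line (i.e. has integer `y`-coordinate): for every value
`a ∈ I^e`, the vertices of the level polygon `{𝒫 = a}` lying in the first octant,
enumerated clockwise (i.e. by increasing `x`-coordinate), have types
`v 1, …, v k`. -/
def IsVertexList (e : ℕ) (v : ℕ → ℕ) (o : ℕ → Bool) : Prop :=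
  ∀ a ∈ Icrit e, ∃ p : ℕ → ℝ × ℝ,
    (∀ j, 1 ≤ j → j ≤ Nat.sqrt e + 1 →
      Ham (p j) = a ∧ p j ∈ DeltaSet ∧ 0 ≤ (p j).2 ∧ (p j).2 ≤ (p j).1 ∧
        vtype (p j) = v j ∧ (o j = true ↔ ∃ n : ℤ, (p j).2 = (n : ℝ))) ∧
    (∀ i j, 1 ≤ i → i < j → j ≤ Nat.sqrt e + 1 → (p i).1 < (p j).1) ∧
    (∀ w : ℝ × ℝ, Ham w = a → w ∈ DeltaSet → 0 ≤ w.2 → w.2 ≤ w.1 →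
      ∃ j, 1 ≤ j ∧ j ≤ Nat.sqrt e + 1 ∧ w = p j)

/-- The extended vertex list: `v_j = v_{2k−j}` for `k < j ≤ 2k−1`. -/
def vext (e : ℕ) (v : ℕ → ℕ) (j : ℕ) : ℕ :=
  if j ≤ Nat.sqrt e + 1 then v j else v (2 * (Nat.sqrt e + 1) - j)

/-- The extended orientation list. -/
def oext (e : ℕ) (o : ℕ → Bool) (j : ℕ) : Bool :=
  if j ≤ Nat.sqrt e + 1 then o j else o (2 * (Nat.sqrt e + 1) - j)

/-- The recursively defined integers `q_j` (here `v` is the extended vertex list):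
`q₁ = (2v₁+1)²`, `q_j = q_{j−1}` if `v_j = v_{j−1}`, and
`q_j = lcm((2v_j+1)(2v_{j−1}+1), q_{j−1})` otherwise. -/
def qseq (v : ℕ → ℕ) : ℕ → ℕ
  | 0 => (2 * v 1 + 1) ^ 2
  | 1 => (2 * v 1 + 1) ^ 2
  | j + 2 =>
    if v (j + 2) = v (j + 1) then qseq v (j + 1)
    else Nat.lcm ((2 * v (j + 2) + 1) * (2 * v (j + 1) + 1)) (qseq v (j + 1))

/-- `p_j = q_j/(2v_j+1)`. -/
def pseq (v : ℕ → ℕ) (j : ℕ) : ℕ := qseq v j / (2 * v j + 1)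

/-- `q = q_{2k−1}`. -/
def qval (e : ℕ) (v : ℕ → ℕ) : ℕ := qseq (vext e v) (2 * (Nat.sqrt e + 1) - 1)

/-- The vector `L_j = (λ q_j/(2v₁+1))·(1,1)`. -/
def Lvec (lam : ℝ) (v1 : ℕ) (qj : ℕ) : ℝ × ℝ :=
  (lam * (qj : ℝ) / (2 * (v1 : ℝ) + 1), lam * (qj : ℝ) / (2 * (v1 : ℝ) + 1))

/-- The lattice `𝕃 = ℤ·L_j + ℤ·((L_j − 𝐰_{v₁,v₁})/2)` as an additive subgroup
of `ℝ²`. -/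
def latticeL (lam : ℝ) (v1 : ℕ) (qj : ℕ) : AddSubgroup (ℝ × ℝ) :=
  AddSubgroup.closure
    {Lvec lam v1 qj, (2⁻¹ : ℝ) • (Lvec lam v1 qj - wmn lam (v1 : ℤ) (v1 : ℤ))}

/-- Forward transit time of `F_λ⁴` to `Λ`. -/
def tTrans (lam : ℝ) (z : ℝ × ℝ) : ℕ :=
  sInf {i : ℕ | 1 ≤ i ∧ (Fl lam)^[4 * i] z ∈ TransSet lam}

/-- The strip map `Ψ(z) = F_λ^{4t(z)}(z)`. -/
def Psi (lam : ℝ) (z : ℝ × ℝ) : ℝ × ℝ := (Fl lam)^[4 * tTrans lam z] z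

/-- Backward transit time of `F_λ⁻⁴` to `Λ`. -/
def sTrans (lam : ℝ) (z : ℝ × ℝ) : ℕ :=
  sInf {i : ℕ | 1 ≤ i ∧ (Flinv lam)^[4 * i] z ∈ TransSet lam}

/-- The inverse strip map `Ψ⁻¹`. -/
def PsiInv (lam : ℝ) (z : ℝ × ℝ) : ℝ × ℝ := (Flinv lam)^[4 * sTrans lam z] z

/-- `Ψ^j` for `j ∈ {−1} ∪ ℕ`. -/
def PsiPow (lam : ℝ) (j : ℤ) (z : ℝ × ℝ) : ℝ × ℝ :=
  if j < 0 then PsiInv lam z else (Psi lam)^[j.toNat] z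

/-- The coordinate unit vector in the non-integer direction of a vertex lying
on a horizontal (`horiz = true`) resp. vertical lattice line. -/
def evec (horiz : Bool) : ℝ × ℝ := if horiz then (1, 0) else (0, 1)

/-- `s ∈ {0, …, 2v_j}` is the code entry at a vertex point `w` of type `vj`: if
the vertex lies on a horizontal line `y = n` then, writing
`w = λ(⌈v_j/λ⌉ + x_j, ⌈n/λ⌉ + y_j)` with `|y_j| < 2v_j+1`, `s ≡ y_j (mod 2v_j+1)`;
analogously in the vertical case. -/
def CodeAt (lam : ℝ) (vj : ℕ) (horiz : Bool) (w : ℝ × ℝ) (s : ℤ) : Prop :=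
  0 ≤ s ∧ s < 2 * (vj : ℤ) + 1 ∧
    (if horiz then
        ∃ n Y yj : ℤ, w.2 = lam * (Y : ℝ) ∧ Y = ⌈(n : ℝ) / lam⌉ + yj ∧
          |yj| < 2 * (vj : ℤ) + 1 ∧ s ≡ yj [ZMOD (2 * (vj : ℤ) + 1)]
      else
        ∃ m X xj : ℤ, w.1 = lam * (X : ℝ) ∧ X = ⌈(m : ℝ) / lam⌉ + xj ∧
          |xj| < 2 * (vj : ℤ) + 1 ∧ s ≡ xj [ZMOD (2 * (vj : ℤ) + 1)])

/-- `σ` is the orbit code `(σ₋₁, σ₁, …, σ_{2k−1})` of `z`. -/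
def IsOrbitCode (lam : ℝ) (e : ℕ) (v : ℕ → ℕ) (o : ℕ → Bool) (z : ℝ × ℝ)
    (σ : ℤ → ℤ) : Prop :=
  CodeAt lam (v 1) (!(o 1)) (PsiInv lam z) (σ (-1)) ∧
    ∀ j : ℕ, 1 ≤ j → j ≤ 2 * (Nat.sqrt e + 1) - 1 →
      CodeAt lam (vext e v j) (oext e o j) ((Psi lam)^[j] z) (σ (j : ℤ))

/-- The Euclidean norm on `ℝ²`. -/
def enorm2 (z : ℝ × ℝ) : ℝ := Real.sqrt (z.1 ^ 2 + z.2 ^ 2)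

/-- The rotation number `ν(λ) = arccos(λ/2)/(2π)`. -/
def nuRot (lam : ℝ) : ℝ := Real.arccos (lam / 2) / (2 * Real.pi)

/-- Distance from a real number to the nearest integer. -/
def distInt (x : ℝ) : ℝ := |x - (round x : ℝ)|

/-- The first-order recurrence time `t*(λ)`. -/
def tstar (lam : ℝ) : ℕ :=
  sInf {k : ℕ | 1 ≤ k ∧ distInt ((k : ℝ) * nuRot lam) < distInt (4 * nuRot lam)}

/-- The square `A(r,λ)` of lattice points. -/
def Aset (r lam : ℝ) : Set (ℝ × ℝ) := {z | IsLatticePt lam z ∧ max |z.1| |z.2| < r}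

end
private lemma glip_aux (a b : ℝ) (hab : a ≤ b) :
    |Int.fract b * (1 - Int.fract b) - Int.fract a * (1 - Int.fract a)| ≤ |b - a| := by
  have ha0 := Int.fract_nonneg a
  have ha1 := (Int.fract_lt_one a).le
  have hb0 := Int.fract_nonneg b
  have hb1 := (Int.fract_lt_one b).le
  have hfa : Int.fract a = a - ⌊a⌋ := rfl
  have hfb : Int.fract b = b - ⌊b⌋ := rfl
  rw [abs_of_nonneg (by linarith : (0:ℝ) ≤ b - a), abs_le]
  rcases eq_or_lt_of_le (Int.floor_le_floor hab) with h | h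
  · have hfloor : (⌊a⌋ : ℝ) = (⌊b⌋ : ℝ) := by exact_mod_cast h
    constructor <;> nlinarith
  · have hfloor : (⌊a⌋ : ℝ) + 1 ≤ (⌊b⌋ : ℝ) := by exact_mod_cast Int.add_one_le_of_lt h
    constructor <;> nlinarith

private lemma glip (a b : ℝ) :
    |Int.fract b * (1 - Int.fract b) - Int.fract a * (1 - Int.fract a)| ≤ |b - a| := by
  rcases le_total a b with h | h
  · exact glip_aux a b h
  · rw [abs_sub_comm, abs_sub_comm b a]; exact glip_aux b a h

private lemma Pfun_fract (x : ℝ) : Pfun x = x^2 + Int.fract x * (1 - Int.fract x) := by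
  rw [Pfun, Int.fract]; ring

private lemma Pfun_even (x : ℝ) : Pfun (-x) = Pfun x := by
  rw [Pfun_fract, Pfun_fract]
  rcases eq_or_ne (Int.fract x) 0 with h | h
  · rw [Int.fract_neg_eq_zero.2 h, h]; ring
  · rw [Int.fract_neg h]; ring

private lemma Pfun_lip (a b : ℝ) : |Pfun b - Pfun a| ≤ |b - a| * (|a| + |b| + 1) := by
  have h1 := glip a b
  have h2 : |b^2 - a^2| ≤ |b - a| * (|a| + |b|) := by
    rw [show b^2 - a^2 = (b-a)*(b+a) by ring, abs_mul]
    have : |b + a| ≤ |a| + |b| := by rw [add_comm]; exact abs_add_le a b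
    exact mul_le_mul_of_nonneg_left this (abs_nonneg _)
  have h3 : Pfun b - Pfun a
      = (b^2 - a^2) + (Int.fract b * (1 - Int.fract b) - Int.fract a * (1 - Int.fract a)) := by
    rw [Pfun_fract, Pfun_fract]; ring
  calc |Pfun b - Pfun a| ≤ |b^2 - a^2|
        + |Int.fract b * (1 - Int.fract b) - Int.fract a * (1 - Int.fract a)| := by
          rw [h3]; exact abs_add_le _ _
    _ ≤ |b - a| * (|a| + |b|) + |b - a| := by linarith
    _ = |b - a| * (|a| + |b| + 1) := by ring

private lemma floor_abs_le (x : ℝ) : |(⌊x⌋ : ℝ)| ≤ |x| + 1 := by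
  have h1 : (⌊x⌋ : ℝ) ≤ x := Int.floor_le x
  have h2 : x - 1 < (⌊x⌋ : ℝ) := Int.sub_one_lt_floor x
  rw [abs_le]
  constructor
  · nlinarith [neg_abs_le x]
  · nlinarith [le_abs_self x]

private lemma Ham_step (lam : ℝ) (hl : 0 ≤ lam) (w : ℝ × ℝ) :
    |Ham (Fl lam w) - Ham w| ≤ lam * (|w.1| + 1) * (|w.2| + |(Fl lam w).1| + 1) := by
  have hdiff : Ham (Fl lam w) - Ham w
      = Pfun (lam * (⌊w.1⌋ : ℝ) - w.2) - Pfun (-(w.2)) := by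
    simp only [Ham, Fl, Pfun_even]; ring
  have h := Pfun_lip (-(w.2)) (lam * (⌊w.1⌋ : ℝ) - w.2)
  have hd : |(lam * (⌊w.1⌋ : ℝ) - w.2) - (-(w.2))| = lam * |(⌊w.1⌋ : ℝ)| := by
    rw [show (lam * (⌊w.1⌋ : ℝ) - w.2) - (-(w.2)) = lam * (⌊w.1⌋ : ℝ) by ring,
      abs_mul, abs_of_nonneg hl]
  have hfl1 : (Fl lam w).1 = lam * (⌊w.1⌋ : ℝ) - w.2 := rfl
  rw [hdiff, hfl1]
  calc |Pfun (lam * (⌊w.1⌋ : ℝ) - w.2) - Pfun (-(w.2))|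
      ≤ (lam * |(⌊w.1⌋ : ℝ)|) * (|-(w.2)| + |lam * (⌊w.1⌋ : ℝ) - w.2| + 1) := by
        rw [← hd]; exact h
    _ ≤ (lam * (|w.1| + 1)) * (|w.2| + |lam * (⌊w.1⌋ : ℝ) - w.2| + 1) := by
        rw [abs_neg]
        apply mul_le_mul_of_nonneg_right
          (mul_le_mul_of_nonneg_left (floor_abs_le w.1) hl)
        positivity
    _ = lam * (|w.1| + 1) * (|w.2| + |lam * (⌊w.1⌋ : ℝ) - w.2| + 1) := by ring

private lemma Fl_fst_abs (lam : ℝ) (hl : 0 ≤ lam) (w : ℝ × ℝ) :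
    |(Fl lam w).1| ≤ |w.2| + lam * (|w.1| + 1) := by
  have hfl1 : (Fl lam w).1 = lam * (⌊w.1⌋ : ℝ) - w.2 := rfl
  have h1 : |lam * (⌊w.1⌋ : ℝ)| ≤ lam * (|w.1| + 1) := by
    rw [abs_mul, abs_of_nonneg hl]
    exact mul_le_mul_of_nonneg_left (floor_abs_le w.1) hl
  rw [hfl1, abs_le]
  constructor <;>
    nlinarith [le_abs_self (lam * (⌊w.1⌋ : ℝ)), neg_abs_le (lam * (⌊w.1⌋ : ℝ)),
      le_abs_self w.2, neg_abs_le w.2]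

set_option maxHeartbeats 1000000 in
/-- Bounded variation of the Hamiltonian `𝒫` along perturbed orbits. -/
theorem Ham_bounded_variation :
    ∀ r : ℝ, 0 < r → ∃ lam0 > (0 : ℝ), ∀ lam : ℝ, 0 < lam → lam < lam0 →
      ∀ z : ℝ × ℝ, IsLatticePt lam z → enorm2 z ≤ r →
        |Ham ((Fl lam)^[4] z) - Ham z| ≤
          lam * (2 * enorm2 z + 3 * Real.sqrt 2) ^ 2 ∧
        |Ham (Fl lam z) - Ham z| ≤ 2 * lam * (enorm2 z + 2) ^ 2 := by
  intro r hr
  refine ⟨1 / ((r + 2) * (22 * r + 33)), by positivity, fun lam hl hlt z _ hz => ?_⟩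
  have hl' : (0:ℝ) ≤ lam := hl.le
  set s := Real.sqrt 2 with hs
  have hs2 : s ^ 2 = 2 := Real.sq_sqrt (by norm_num)
  have hs0 : (0:ℝ) ≤ s := Real.sqrt_nonneg 2
  set N := enorm2 z with hNdef
  have hN0 : (0:ℝ) ≤ N := Real.sqrt_nonneg _
  set X := |z.1| with hXdef
  set Y := |z.2| with hYdef
  have hX0 : (0:ℝ) ≤ X := abs_nonneg _
  have hY0 : (0:ℝ) ≤ Y := abs_nonneg _
  have hN2 : X ^ 2 + Y ^ 2 = N ^ 2 := by
    rw [hXdef, hYdef, hNdef, enorm2, sq_abs, sq_abs, Real.sq_sqrt (by positivity)]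
  have hXN : X ≤ N := by
    refine le_of_pow_le_pow_left₀ (n := 2) (by norm_num) hN0 ?_
    linarith [sq_nonneg Y]
  have hYN : Y ≤ N := by
    refine le_of_pow_le_pow_left₀ (n := 2) (by norm_num) hN0 ?_
    linarith [sq_nonneg X]
  have hNr : N ≤ r := hz
  have hXY2 : 2 * (X * Y) ≤ N ^ 2 := by linarith [sq_nonneg (X - Y)]
  have hsum : X + Y ≤ s * N := by
    have h2 : (X + Y) ^ 2 ≤ 2 * N ^ 2 := by linarith [sq_nonneg (X - Y)]
    have h1 : X + Y = Real.sqrt ((X + Y) ^ 2) := (Real.sqrt_sq (by positivity)).symm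
    rw [h1]
    calc Real.sqrt ((X + Y) ^ 2) ≤ Real.sqrt (2 * N ^ 2) := Real.sqrt_le_sqrt h2
      _ = s * N := by rw [Real.sqrt_mul (by norm_num), Real.sqrt_sq hN0]
  have hD : (0:ℝ) < (r + 2) * (22 * r + 33) := by positivity
  have hlam1 : lam * ((r + 2) * (22 * r + 33)) ≤ 1 := ((lt_div_iff₀ hD).1 hlt).le
  set ε := lam * (N + 2) with hεdef
  have hε0 : (0:ℝ) ≤ ε := by positivity
  have hεN : ε * (22 * N + 33) ≤ 1 := by
    have hmono : (N + 2) * (22 * N + 33) ≤ (r + 2) * (22 * r + 33) := by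
      have hNN : N * N ≤ r * r := mul_self_le_mul_self hN0 hNr
      have e1 : (N + 2) * (22 * N + 33) = 22 * (N * N) + 77 * N + 66 := by ring
      have e2 : (r + 2) * (22 * r + 33) = 22 * (r * r) + 77 * r + 66 := by ring
      rw [e1, e2]; linarith
    calc ε * (22 * N + 33) = lam * ((N + 2) * (22 * N + 33)) := by rw [hεdef]; ring
      _ ≤ lam * ((r + 2) * (22 * r + 33)) := mul_le_mul_of_nonneg_left hmono hl'
      _ ≤ 1 := hlam1
  have hεN' : (0:ℝ) ≤ ε * N := mul_nonneg hε0 hN0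
  have hεN2 : ε * (22 * N + 33) = 22 * (ε * N) + 33 * ε := by ring
  have h22 : 22 * (ε * N) ≤ 1 := by rw [hεN2] at hεN; linarith
  have h33 : 33 * ε ≤ 1 := by rw [hεN2] at hεN; linarith
  have hε1 : ε ≤ 1 := by linarith
  have hεsq : ε * ε ≤ ε := by
    have := mul_le_mul_of_nonneg_left hε1 hε0
    linarith [this, (by ring : ε * 1 = ε)]
  have hεX : ε * X ≤ ε * N := mul_le_mul_of_nonneg_left hXN hε0
  have hεY : ε * Y ≤ ε * N := mul_le_mul_of_nonneg_left hYN hε0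
  have hsN0 : (0:ℝ) ≤ s * N := mul_nonneg hs0 hN0
  -- the four iterates
  set z1 := Fl lam z with hz1
  set z2 := Fl lam z1 with hz2
  set z3 := Fl lam z2 with hz3
  set z4 := Fl lam z3 with hz4
  have hiter : (Fl lam)^[4] z = z4 := rfl
  set A1 := |z1.1| with hA1def
  set A2 := |z2.1| with hA2def
  set A3 := |z3.1| with hA3def
  set A4 := |z4.1| with hA4def
  have hA10 : (0:ℝ) ≤ A1 := abs_nonneg _
  have hA20 : (0:ℝ) ≤ A2 := abs_nonneg _
  have hA30 : (0:ℝ) ≤ A3 := abs_nonneg _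
  have hA40 : (0:ℝ) ≤ A4 := abs_nonneg _
  have hc1 : z1.2 = z.1 := rfl
  have hc2 : z2.2 = z1.1 := rfl
  have hc3 : z3.2 = z2.1 := rfl
  have hstepε : ∀ t : ℝ, t ≤ N + 1 → lam * (t + 1) ≤ ε := fun t ht => by
    rw [hεdef]; exact mul_le_mul_of_nonneg_left (by linarith) hl'
  have hA1b : A1 ≤ Y + ε := by
    have h := Fl_fst_abs lam hl' z
    rw [← hXdef, ← hYdef, ← hA1def] at h
    have := hstepε X (by linarith)
    linarith
  have hA2b : A2 ≤ X + ε := by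
    have h := Fl_fst_abs lam hl' z1
    rw [hc1, ← hXdef, ← hA1def, ← hA2def] at h
    have := hstepε A1 (by linarith)
    linarith
  have hA3b : A3 ≤ Y + 2 * ε := by
    have h := Fl_fst_abs lam hl' z2
    rw [hc2, ← hA1def, ← hA2def, ← hA3def] at h
    have := hstepε A2 (by linarith)
    linarith
  have hA4b : A4 ≤ X + 2 * ε := by
    have h := Fl_fst_abs lam hl' z3
    rw [hc3, ← hA2def, ← hA3def, ← hA4def] at h
    have := hstepε A3 (by linarith)
    linarith
  -- step estimates
  have hd0 : |Ham z1 - Ham z| ≤ lam * ((X + 1) * (Y + A1 + 1)) := by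
    have h := Ham_step lam hl' z
    rw [← hXdef, ← hYdef, ← hz1, ← hA1def] at h
    exact h.trans_eq (by ring)
  have hd1 : |Ham z2 - Ham z1| ≤ lam * ((A1 + 1) * (X + A2 + 1)) := by
    have h := Ham_step lam hl' z1
    rw [hc1, ← hXdef, ← hz2, ← hA1def, ← hA2def] at h
    exact h.trans_eq (by ring)
  have hd2 : |Ham z3 - Ham z2| ≤ lam * ((A2 + 1) * (A1 + A3 + 1)) := by
    have h := Ham_step lam hl' z2
    rw [hc2, ← hz3, ← hA1def, ← hA2def, ← hA3def] at h
    exact h.trans_eq (by ring)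
  have hd3 : |Ham z4 - Ham z3| ≤ lam * ((A3 + 1) * (A2 + A4 + 1)) := by
    have h := Ham_step lam hl' z3
    rw [hc3, ← hz4, ← hA2def, ← hA3def, ← hA4def] at h
    exact h.trans_eq (by ring)
  have t1 : (X + 1) * (Y + A1 + 1) ≤ (X + 1) * (2 * Y + ε + 1) :=
    mul_le_mul_of_nonneg_left (by linarith) (by linarith)
  constructor
  · -- four-step bound
    rw [hiter]
    have habs2 := abs_add_le (Ham z2 - Ham z1) (Ham z1 - Ham z)
    have habs3 := abs_add_le (Ham z3 - Ham z2) ((Ham z2 - Ham z1) + (Ham z1 - Ham z))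
    have habs4 := abs_add_le (Ham z4 - Ham z3)
      ((Ham z3 - Ham z2) + ((Ham z2 - Ham z1) + (Ham z1 - Ham z)))
    have htel : |Ham z4 - Ham z| ≤ |Ham z4 - Ham z3| + |Ham z3 - Ham z2|
        + |Ham z2 - Ham z1| + |Ham z1 - Ham z| := by
      have hEq : Ham z4 - Ham z = (Ham z4 - Ham z3)
          + ((Ham z3 - Ham z2) + ((Ham z2 - Ham z1) + (Ham z1 - Ham z))) := by ring
      rw [hEq]
      linarith
    have t2 : (A1 + 1) * (X + A2 + 1) ≤ (Y + ε + 1) * (2 * X + ε + 1) :=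
      mul_le_mul (by linarith) (by linarith) (by linarith) (by linarith)
    have t3 : (A2 + 1) * (A1 + A3 + 1) ≤ (X + ε + 1) * (2 * Y + 3 * ε + 1) :=
      mul_le_mul (by linarith) (by linarith) (by linarith) (by linarith)
    have t4 : (A3 + 1) * (A2 + A4 + 1) ≤ (Y + 2 * ε + 1) * (2 * X + 3 * ε + 1) :=
      mul_le_mul (by linarith) (by linarith) (by linarith) (by linarith)
    have hfinal : (X + 1) * (2 * Y + ε + 1) + (Y + ε + 1) * (2 * X + ε + 1)
        + (X + ε + 1) * (2 * Y + 3 * ε + 1) + (Y + 2 * ε + 1) * (2 * X + 3 * ε + 1)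
        ≤ (2 * N + 3 * s) ^ 2 := by
      have hexp : (X + 1) * (2 * Y + ε + 1) + (Y + ε + 1) * (2 * X + ε + 1)
          + (X + ε + 1) * (2 * Y + 3 * ε + 1) + (Y + 2 * ε + 1) * (2 * X + 3 * ε + 1)
          = 8 * (X * Y) + 10 * (ε * X) + 6 * (ε * Y) + 6 * X + 6 * Y
            + 10 * (ε * ε) + 12 * ε + 4 := by ring
      have hrhs : (2 * N + 3 * s) ^ 2 = 4 * N ^ 2 + 12 * (s * N) + 9 * s ^ 2 := by ring
      rw [hexp, hrhs, hs2]
      linarith [hXY2, hsum, h22, h33, hε0, hεsq, hεX, hεY, hsN0, hεN']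
    have hlamBIG : lam * ((X + 1) * (Y + A1 + 1)) + lam * ((A1 + 1) * (X + A2 + 1))
        + lam * ((A2 + 1) * (A1 + A3 + 1)) + lam * ((A3 + 1) * (A2 + A4 + 1))
        ≤ lam * (2 * N + 3 * s) ^ 2 := by
      have hB : (X + 1) * (Y + A1 + 1) + (A1 + 1) * (X + A2 + 1)
          + (A2 + 1) * (A1 + A3 + 1) + (A3 + 1) * (A2 + A4 + 1)
          ≤ (2 * N + 3 * s) ^ 2 := by linarith
      have := mul_le_mul_of_nonneg_left hB hl'
      linarith [this, (by ring : lam * ((X + 1) * (Y + A1 + 1) + (A1 + 1) * (X + A2 + 1)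
        + (A2 + 1) * (A1 + A3 + 1) + (A3 + 1) * (A2 + A4 + 1))
        = lam * ((X + 1) * (Y + A1 + 1)) + lam * ((A1 + 1) * (X + A2 + 1))
        + lam * ((A2 + 1) * (A1 + A3 + 1)) + lam * ((A3 + 1) * (A2 + A4 + 1)))]
    linarith
  · -- one-step bound
    have hfac : (X + 1) * (2 * Y + ε + 1) ≤ 2 * (N + 2) ^ 2 := by
      have hexp : (X + 1) * (2 * Y + ε + 1)
          = 2 * (X * Y) + (ε * X) + X + 2 * Y + ε + 1 := by ring
      have hrhs : 2 * (N + 2) ^ 2 = 2 * N ^ 2 + 8 * N + 8 := by ring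
      rw [hexp, hrhs]
      have hN2' : N ^ 2 ≤ 2 * N ^ 2 := by linarith [sq_nonneg N]
      linarith [hXY2, h22, h33, hεX, hXN, hYN, hε0, hεN']
    have h2' : lam * ((X + 1) * (Y + A1 + 1)) ≤ lam * (2 * (N + 2) ^ 2) :=
      mul_le_mul_of_nonneg_left (le_trans t1 hfac) hl'
    calc |Ham z1 - Ham z| ≤ lam * ((X + 1) * (Y + A1 + 1)) := hd0
      _ ≤ lam * (2 * (N + 2) ^ 2) := h2'
      _ = 2 * lam * (N + 2) ^ 2 := by ring
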